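/- arXiv:2310.08131 — 2 statements merged into one kernel-verified Lean document; each statement's English description precedes it below -/
import Mathlib

section
/- Commutation of Pfaffian-type elements with generators, mixed case (Lemma 2-3(2)): Let p ≥ 0, N ≥ 3 with 2p+2 ≤ N, let I ∈ T_{2p+2}(N), and let 1 ≤ s,t ≤ N with s an entry of I and t not an entry of I. Write s = i_q (the q-th entry of I) and let J := I∪{t}∖{s} ∈ T_{2p+2}(N) (the increasing rearrangement after replacing s by t), with t = j_r the r-th entry of J. Then in U(𝔰𝔬(N,ℂ)) one has W̃_I·ι(X̃_{st}) = ι(X̃_{st})·W̃_I − (−1)^{q−r}·W̃_{I∪{t}∖{s}}. -/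
open scoped Classical Matrix

attribute [local instance] LieRing.ofAssociativeRing

noncomputable section

namespace SOC

/-- 𝔰𝔬(N,ℂ): skew-symmetric N×N complex matrices. -/
abbrev so (N : ℕ) : LieSubalgebra ℂ (Matrix (Fin N) (Fin N) ℂ) :=
  skewAdjointMatricesLieSubalgebra (1 : Matrix (Fin N) (Fin N) ℂ)

abbrev U (N : ℕ) := UniversalEnvelopingAlgebra ℂ (so N)

def ι {N : ℕ} (x : so N) : U N := UniversalEnvelopingAlgebra.ι ℂ x

lemma mem_so {N : ℕ} (A : Matrix (Fin N) (Fin N) ℂ) (h : Aᵀ = -A) : A ∈ so N := by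
  rw [mem_skewAdjointMatricesLieSubalgebra, mem_skewAdjointMatricesSubmodule]
  show Aᵀ * 1 = 1 * (-A)
  simp [h]

/-- X̃_{ij} = E_{ji} − E_{ij}. -/
def Xt {N : ℕ} (i j : Fin N) : so N :=
  ⟨Matrix.single j i 1 - Matrix.single i j 1, by
    apply mem_so
    ext a b
    simp [Matrix.single, Matrix.transpose_apply, and_comm]⟩

def pos0 {p : ℕ} (a : Fin p) : Fin (2*p) := ⟨2*a.1, by have := a.2; omega⟩
def pos1 {p : ℕ} (a : Fin p) : Fin (2*p) := ⟨2*a.1+1, by have := a.2; omega⟩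

/-- The set P₊(I) of admissible permutations. -/
def Pplus {N p : ℕ} (f : Fin (2*p) → Fin N) (π : Equiv.Perm (Fin (2*p))) : Prop :=
  (StrictMono fun a : Fin p => f (π (pos0 a))) ∧ ∀ a : Fin p, f (π (pos0 a)) < f (π (pos1 a))

/-- The Pfaffian-type element W̃ attached to a finset of cardinality 2p (and 0 otherwise). -/
def Wt (N p : ℕ) (s : Finset (Fin N)) : U N :=
  if h : s.card = 2*p then
    ∑ π : Equiv.Perm (Fin (2*p)),
      if Pplus (fun a => s.orderEmbOfFin h a) π then
        ((Equiv.Perm.sign π : ℤˣ) : ℤ) •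
          (List.ofFn fun a : Fin p =>
            ι (Xt (s.orderEmbOfFin h (π (pos0 a))) (s.orderEmbOfFin h (π (pos1 a))))).prod
      else 0
  else 0

/-- Ñ_l^q = X̃_{l,N+1−q} + √−1 X̃_{q,l} (0-indexed: N+1−q ↦ rev q). -/
def Ntl {N : ℕ} (q l : Fin N) : so N := Xt l q.rev + Complex.I • Xt q l

/-- ñ(0)_q. -/
def n0 (N : ℕ) (q : Fin N) : Submodule ℂ (so N) :=
  Submodule.span ℂ {x | ∃ l : Fin N, q < l ∧ l < q.rev ∧ x = Ntl q l}

/-- ñ(0)_q · U : finite sums of products ι(v)·u with v ∈ ñ(0)_q. -/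
def nU (N : ℕ) (q : Fin N) : Submodule ℂ (U N) :=
  Submodule.span ℂ {x | ∃ v ∈ n0 N q, ∃ u : U N, x = ι v * u}

/-- (ñ(0)_1 + ⋯ + ñ(0)_s) · U. -/
def nUs (N s : ℕ) : Submodule ℂ (U N) :=
  Submodule.span ℂ {x | ∃ q : Fin N, (q : ℕ) < s ∧ ∃ v ∈ n0 N q, ∃ u : U N, x = ι v * u}

/-- The central element W̃_p = Σ_{I ∈ T_{2p}(N)} W̃_I². -/
def Wc (N p : ℕ) : U N :=
  ∑ I ∈ Finset.univ.filter (fun I : Finset (Fin N) => I.card = 2*p), (Wt N p I)^2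

end SOC

/-
Replacing the sum over `P₊(I)` by the sum over all permutations `π` of the positions, with terms
`sgn π · Π_a X̃_{i_{π(2a-1)} i_{π(2a)}}`, multiplies `W̃_I` by `2^(p+1) (p+1)!`: every permutation
factors uniquely as an element of `P₊(I)` times an element of the hyperoctahedral group permuting
the pairs `{1,2}, {3,4}, …` and flipping some of them (sort the pairs by their minima, orient each
pair increasingly), and each term is invariant under that group because the factors pairwise
commute and `X̃_{ji} = -X̃_{ij}`.

For the full sum the commutator with `X̃_{st}` is computed term by term. Bracketing with `X̃_{st}`
is a derivation which kills every factor not involving `s` and turns the factor involving `s` into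
minus the same factor with `s` replaced by `t`. This gives minus the full sum for `I` with its
`q`-th entry replaced by `t`, which is the full sum for `J` reindexed by a product of two cycles,
of sign `(-1)^(q+r)`.
-/

section

open Equiv Function

variable {R : Type*} [Ring R]

lemma prod_ofFn_mul_sub_mul_prod_ofFn {m : ℕ} (x : Fin m → R) (y : R) :
    (List.ofFn x).prod * y - y * (List.ofFn x).prod =
      ∑ a, (List.ofFn (update x a (x a * y - y * x a))).prod := by
  induction m with
  | zero => simp
  | succ m ih =>
    have hsucc : ∀ (a : Fin m) (z : R), update x a.succ z ∘ Fin.succ = update (x ∘ Fin.succ) a z :=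
      fun a z => update_comp_eq_of_injective _ (Fin.succ_injective m) _ _
    have hzero : ∀ z : R, update x 0 z ∘ Fin.succ = x ∘ Fin.succ :=
      fun z => funext fun a => update_of_ne (Fin.succ_ne_zero a) _ _
    have hprod : ∀ z : Fin (m + 1) → R,
        (List.ofFn z).prod = z 0 * (List.ofFn (z ∘ Fin.succ)).prod := fun z => by rw [List.ofFn_succ, List.prod_cons]; rfl
    simp only [hprod, Fin.sum_univ_succ, update_self, hzero, hsucc,
      update_of_ne (Fin.succ_ne_zero _).symm, ← Finset.mul_sum]
    have ih' := ih (x ∘ Fin.succ)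
    simp only [Function.comp_apply] at ih'
    rw [← ih']
    noncomm_ring

lemma prod_ofFn_zsmul {m : ℕ} (c : Fin m → ℤ) (x : Fin m → R) :
    (List.ofFn fun a => c a • x a).prod = (∏ a, c a) • (List.ofFn x).prod := by
  induction m with
  | zero => simp
  | succ m ih =>
    simp only [List.ofFn_succ, List.prod_cons, Fin.prod_univ_succ, ih, smul_mul_assoc,
      mul_smul_comm, smul_smul, mul_comm (c 0)]

lemma prod_ofFn_update_neg {m : ℕ} (x : Fin m → R) (a : Fin m) (z : R) :
    (List.ofFn (update x a (-z))).prod = -(List.ofFn (update x a z)).prod := by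
  have hsign : update x a (-z) = fun i => (if i = a then (-1 : ℤ) else 1) • update x a z i := by
    ext i
    by_cases hi : i = a <;> simp [hi]
  rw [hsign, prod_ofFn_zsmul, Finset.prod_ite_eq' Finset.univ a, if_pos (Finset.mem_univ a),
    neg_one_smul]

lemma prod_ofFn_comp_perm {m : ℕ} (x : Fin m → R) (τ : Equiv.Perm (Fin m))
    (hx : ∀ i j, Commute (x i) (x j)) : (List.ofFn (x ∘ τ)).prod = (List.ofFn x).prod :=
  (τ.ofFn_comp_perm x).prod_eq' (List.pairwise_ofFn.mpr fun i j _ => hx (τ i) (τ j))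

lemma prod_ofFn_mul_sub_mul_prod_ofFn_of_single {m : ℕ} (x x' : Fin m → R) (y : R) (a₀ : Fin m)
    (hcomm : ∀ a ≠ a₀, Commute (x a) y) (heq : ∀ a ≠ a₀, x' a = x a)
    (h₀ : x a₀ * y - y * x a₀ = -x' a₀) :
    (List.ofFn x).prod * y - y * (List.ofFn x).prod = -(List.ofFn x').prod := by
  rw [prod_ofFn_mul_sub_mul_prod_ofFn, Finset.sum_eq_single a₀, h₀, prod_ofFn_update_neg]
  · congr 3
    ext a
    by_cases ha : a = a₀
    · rw [ha, update_self]
    · rw [update_of_ne ha, heq a ha]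
  · intro a _ ha
    exact List.prod_eq_zero (List.mem_ofFn.mpr ⟨a, by rw [update_self, (hcomm a ha).eq, sub_self]⟩)
  · exact fun h => (h (Finset.mem_univ a₀)).elim

lemma Finset.removeNth_orderEmbOfFin {α : Type*} [LinearOrder α] {n : ℕ} {S T : Finset α}
    (hS : S.card = n + 1) (hT : T.card = n) (q : Fin (n + 1))
    (hST : T = S.erase (S.orderEmbOfFin hS q)) :
    q.removeNth (S.orderEmbOfFin hS) = T.orderEmbOfFin hT := by
  refine Finset.orderEmbOfFin_unique hT (fun i => ?_)
    ((S.orderEmbOfFin hS).strictMono.comp (Fin.strictMono_succAbove q))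
  rw [hST, Finset.mem_erase, Fin.removeNth, (S.orderEmbOfFin hS).injective.ne_iff]
  exact ⟨Fin.succAbove_ne q i, S.orderEmbOfFin_mem hS _⟩

lemma Finset.update_orderEmbOfFin_eq_comp {α : Type*} [LinearOrder α] {n : ℕ} {I : Finset α}
    (hI : I.card = n + 1) {s t : α} (hs : s ∈ I) (ht : t ∉ I)
    (hJ : (insert t (I.erase s)).card = n + 1) {q r : Fin (n + 1)}
    (hq : I.orderEmbOfFin hI q = s) (hr : (insert t (I.erase s)).orderEmbOfFin hJ r = t) :
    update (I.orderEmbOfFin hI) q t =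
      (insert t (I.erase s)).orderEmbOfFin hJ ∘
        ⇑((Fin.cycleRange r).symm * Fin.cycleRange q) := by
  have hK : (I.erase s).card = n := by rw [Finset.card_erase_of_mem hs, hI, Nat.add_sub_cancel]
  have hcons : update (I.orderEmbOfFin hI) q t ∘ (Fin.cycleRange q).symm =
      (insert t (I.erase s)).orderEmbOfFin hJ ∘ (Fin.cycleRange r).symm := by
    rw [← Fin.cons_removeNth_eq_comp_cycleRange_symm, ← Fin.cons_removeNth_eq_comp_cycleRange_symm,
      update_self, Fin.removeNth_update, Finset.removeNth_orderEmbOfFin hI hK q (by rw [hq]),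
      Finset.removeNth_orderEmbOfFin hJ hK r
        (by rw [hr, Finset.erase_insert fun h => ht (Finset.mem_of_mem_erase h)]), hr]
  ext1 x
  simpa using congrFun hcons (Fin.cycleRange q x)

lemma Fin.sign_cycleRange_symm_mul_cycleRange {n : ℕ} (q r : Fin n) :
    ((Perm.sign ((Fin.cycleRange r).symm * Fin.cycleRange q) : ℤˣ) : ℤ) = (-1) ^ ((q : ℕ) + r) := by
  rw [map_mul, Perm.sign_symm, Fin.sign_cycleRange, Fin.sign_cycleRange, ← pow_add, add_comm]
  simp

end

namespace SOC

open Equiv Function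

variable {N m : ℕ}

lemma ι_mul_sub_ι_mul (x y : so N) : ι x * ι y - ι y * ι x = ι ⁅x, y⁆ := by
  rw [ι, ι, ι, LieHom.map_lie, Ring.lie_def]

lemma Xt_swap (i j : Fin N) : Xt j i = -Xt i j :=
  Subtype.ext (neg_sub _ _).symm

lemma coe_lie_so (x y : so N) :
    ((⁅x, y⁆ : so N) : Matrix (Fin N) (Fin N) ℂ) = (x : Matrix (Fin N) (Fin N) ℂ) * y - y * x := by
  rw [LieSubalgebra.coe_bracket, Ring.lie_def]

lemma lie_Xt_Xt_of_disjoint {i j k l : Fin N} (hik : i ≠ k) (hil : i ≠ l) (hjk : j ≠ k)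
    (hjl : j ≠ l) : ⁅Xt i j, Xt k l⁆ = 0 := by
  apply Subtype.ext
  rw [coe_lie_so, ZeroMemClass.coe_zero]
  simp only [Xt, sub_mul, mul_sub]
  simp [Matrix.single_mul_single_of_ne, hik, hil, hjk, hjl, hik.symm, hil.symm, hjk.symm, hjl.symm]

lemma lie_Xt_Xt_of_eq_right {u v t : Fin N} (hvu : v ≠ u) (hvt : v ≠ t) (hut : u ≠ t) :
    ⁅Xt v u, Xt u t⁆ = -Xt v t := by
  apply Subtype.ext
  rw [coe_lie_so, NegMemClass.coe_neg]
  simp only [Xt, sub_mul, mul_sub]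
  simp [Matrix.single_mul_single_of_ne, Matrix.single_mul_single_same, hvu, hvt, hut, hvu.symm,
    hvt.symm, hut.symm]

lemma lie_Xt_Xt_of_eq_left {u v t : Fin N} (hvu : v ≠ u) (hvt : v ≠ t) (hut : u ≠ t) :
    ⁅Xt u v, Xt u t⁆ = -Xt t v := by
  rw [Xt_swap v u, neg_lie, lie_Xt_Xt_of_eq_right hvu hvt hut, neg_neg, Xt_swap v t, neg_neg]

lemma commute_ι_Xt_of_disjoint {i j k l : Fin N} (hik : i ≠ k) (hil : i ≠ l) (hjk : j ≠ k)
    (hjl : j ≠ l) : Commute (ι (Xt i j)) (ι (Xt k l)) :=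
  sub_eq_zero.mp <| by rw [ι_mul_sub_ι_mul, lie_Xt_Xt_of_disjoint hik hil hjk hjl, ι, map_zero]

/-- `(a, i) ↦ 2a + i`: slot `i` of the `a`-th pair `(pos0 a, pos1 a)`. -/
def pairEquiv (m : ℕ) : Fin m × Fin 2 ≃ Fin (2 * m) :=
  finProdFinEquiv.trans (finCongr (Nat.mul_comm m 2))

lemma pairEquiv_zero {m : ℕ} (a : Fin m) : pairEquiv m (a, 0) = pos0 a :=
  Fin.ext (by simp [pairEquiv, pos0])

lemma pairEquiv_one {m : ℕ} (a : Fin m) : pairEquiv m (a, 1) = pos1 a :=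
  Fin.ext (by simp [pairEquiv, pos1]; omega)

lemma pos0_injective {m : ℕ} : Injective (pos0 (p := m)) := fun a b h =>
  Fin.ext (by have := congrArg Fin.val h; simp only [pos0] at this; omega)

lemma pos1_injective {m : ℕ} : Injective (pos1 (p := m)) := fun a b h =>
  Fin.ext (by have := congrArg Fin.val h; simp only [pos1] at this; omega)

lemma pos0_ne_pos1 {m : ℕ} (a b : Fin m) : pos0 a ≠ pos1 b := fun h => by
  have := congrArg Fin.val h; simp only [pos0, pos1] at this; omega

def pairingFactor (f : Fin (2 * m) → Fin N) (π : Perm (Fin (2 * m))) (a : Fin m) : U N :=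
  ι (Xt (f (π (pos0 a))) (f (π (pos1 a))))

def pairingProd (f : Fin (2 * m) → Fin N) (π : Perm (Fin (2 * m))) : U N :=
  (List.ofFn (pairingFactor f π)).prod

def pairingTerm (f : Fin (2 * m) → Fin N) (π : Perm (Fin (2 * m))) : U N :=
  ((Perm.sign π : ℤˣ) : ℤ) • pairingProd f π

def pfaffianSum (f : Fin (2 * m) → Fin N) : U N :=
  ∑ π, pairingTerm f π

lemma Wt_eq_sum_pairingTerm (S : Finset (Fin N)) (h : S.card = 2 * m) :
    Wt N m S = ∑ π ∈ Finset.univ.filter (Pplus (S.orderEmbOfFin h)),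
      pairingTerm (S.orderEmbOfFin h) π := by
  rw [Wt, dif_pos h, Finset.sum_filter]
  rfl

lemma pairingFactor_commute {f : Fin (2 * m) → Fin N} (hf : Injective f) (π : Perm (Fin (2 * m)))
    (a b : Fin m) : Commute (pairingFactor f π a) (pairingFactor f π b) := by
  obtain rfl | hab := eq_or_ne a b
  · exact Commute.refl _
  have hval : ∀ x y, x ≠ y → f (π x) ≠ f (π y) := fun x y h => hf.ne (π.injective.ne h)
  exact commute_ι_Xt_of_disjoint (hval _ _ (pos0_injective.ne hab)) (hval _ _ (pos0_ne_pos1 a b))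
    (hval _ _ (pos0_ne_pos1 b a).symm) (hval _ _ (pos1_injective.ne hab))

lemma pairingProd_mul_sub_mul_pairingProd {f : Fin (2 * m) → Fin N} (hf : Injective f)
    {t : Fin N} (ht : ∀ x, f x ≠ t) (q : Fin (2 * m)) (π : Perm (Fin (2 * m))) :
    pairingProd f π * ι (Xt (f q) t) - ι (Xt (f q) t) * pairingProd f π =
      -pairingProd (update f q t) π := by
  obtain ⟨⟨a₀, i₀⟩, hq⟩ := (pairEquiv m).surjective (π.symm q)
  rw [eq_symm_apply] at hq
  have hne : ∀ a ≠ a₀, π (pos0 a) ≠ q ∧ π (pos1 a) ≠ q := fun a ha => by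
    have hpos : ∀ i, pairEquiv m (a, i) ≠ pairEquiv m (a₀, i₀) :=
      fun i => (pairEquiv m).injective.ne fun h => ha (congrArg Prod.fst h)
    rw [← pairEquiv_zero, ← pairEquiv_one, ← hq]
    exact ⟨π.injective.ne (hpos 0), π.injective.ne (hpos 1)⟩
  refine prod_ofFn_mul_sub_mul_prod_ofFn_of_single _ _ _ a₀ (fun a ha => ?_) (fun a ha => ?_) ?_
  · exact commute_ι_Xt_of_disjoint (hf.ne (hne a ha).1) (ht _) (hf.ne (hne a ha).2) (ht _)
  · rw [pairingFactor, pairingFactor, update_of_ne (hne a ha).1, update_of_ne (hne a ha).2]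
  · have hpos : π (pos0 a₀) ≠ π (pos1 a₀) := π.injective.ne (pos0_ne_pos1 a₀ a₀)
    have hval : f (π (pos0 a₀)) ≠ f (π (pos1 a₀)) := hf.ne hpos
    simp only [pairingFactor, ι_mul_sub_ι_mul]
    match i₀, hq with
    | 0, hq =>
      rw [pairEquiv_zero] at hq
      subst hq
      rw [update_self, update_of_ne hpos.symm, lie_Xt_Xt_of_eq_left hval.symm (ht _) (ht _), ι, ι,
        map_neg]
    | 1, hq =>
      rw [pairEquiv_one] at hq
      subst hq
      rw [update_self, update_of_ne hpos, lie_Xt_Xt_of_eq_right hval (ht _) (ht _), ι, ι, map_neg]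

lemma pfaffianSum_mul_sub_mul_pfaffianSum {f : Fin (2 * m) → Fin N} (hf : Injective f)
    {t : Fin N} (ht : ∀ x, f x ≠ t) (q : Fin (2 * m)) :
    pfaffianSum f * ι (Xt (f q) t) - ι (Xt (f q) t) * pfaffianSum f =
      -pfaffianSum (update f q t) := by
  simp only [pfaffianSum, pairingTerm, Finset.sum_mul, Finset.mul_sum, ← Finset.sum_sub_distrib,
    ← Finset.sum_neg_distrib, smul_mul_assoc, mul_smul_comm, ← smul_sub, ← smul_neg,
    pairingProd_mul_sub_mul_pairingProd hf ht q]

lemma pfaffianSum_comp_perm (f : Fin (2 * m) → Fin N) (c : Perm (Fin (2 * m))) :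
    pfaffianSum (f ∘ c) = ((Perm.sign c : ℤˣ) : ℤ) • pfaffianSum f := by
  rw [pfaffianSum, pfaffianSum, Finset.smul_sum]
  refine Fintype.sum_equiv (Equiv.mulLeft c) _ _ fun π => ?_
  have hsign : ((Perm.sign c : ℤˣ) : ℤ) * ((Perm.sign (c * π) : ℤˣ) : ℤ) = (Perm.sign π : ℤˣ) := by
    rw [map_mul, ← Units.val_mul, ← mul_assoc, Int.units_mul_self, one_mul]
  rw [Equiv.coe_mulLeft, pairingTerm, pairingTerm, smul_smul, hsign]
  rfl

def hyperoctahedral (s : Finset (Fin m)) (τ : Perm (Fin m)) : Perm (Fin (2 * m)) :=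
  (pairEquiv m).permCongr
    (prodCongrRight (fun a => if a ∈ s then swap 0 1 else 1) * prodCongrLeft fun _ => τ)

lemma hyperoctahedral_pairEquiv (s : Finset (Fin m)) (τ : Perm (Fin m)) (a : Fin m) (i : Fin 2) :
    hyperoctahedral s τ (pairEquiv m (a, i)) =
      pairEquiv m (τ a, if τ a ∈ s then swap 0 1 i else i) := by
  simp only [hyperoctahedral, permCongr_apply, symm_apply_apply, Perm.mul_apply,
    prodCongrLeft_apply, prodCongrRight_apply]
  split_ifs <;> rfl

lemma hyperoctahedral_pos0 (s : Finset (Fin m)) (τ : Perm (Fin m)) (a : Fin m) :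
    hyperoctahedral s τ (pos0 a) = if τ a ∈ s then pos1 (τ a) else pos0 (τ a) := by
  rw [← pairEquiv_zero, hyperoctahedral_pairEquiv]
  split_ifs
  · rw [swap_apply_left, pairEquiv_one]
  · rw [pairEquiv_zero]

lemma hyperoctahedral_pos1 (s : Finset (Fin m)) (τ : Perm (Fin m)) (a : Fin m) :
    hyperoctahedral s τ (pos1 a) = if τ a ∈ s then pos0 (τ a) else pos1 (τ a) := by
  rw [← pairEquiv_one, hyperoctahedral_pairEquiv]
  split_ifs
  · rw [swap_apply_right, pairEquiv_zero]
  · rw [pairEquiv_one]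

lemma sign_hyperoctahedral (s : Finset (Fin m)) (τ : Perm (Fin m)) :
    Perm.sign (hyperoctahedral s τ) = (-1) ^ s.card := by
  have hflip : ∀ a, Perm.sign (if a ∈ s then swap (0 : Fin 2) 1 else 1) = if a ∈ s then -1 else 1 :=
    fun a => by split_ifs <;> simp
  rw [hyperoctahedral, Perm.sign_permCongr, map_mul, Perm.sign_prodCongrRight,
    Perm.sign_prodCongrLeft, Finset.prod_congr rfl fun a _ => hflip a, Fintype.prod_ite_mem,
    Finset.prod_const, Finset.prod_const, Finset.card_univ, Fintype.card_fin, Int.units_sq,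
    mul_one]

lemma pairingFactor_mul_hyperoctahedral (f : Fin (2 * m) → Fin N) (π : Perm (Fin (2 * m)))
    (s : Finset (Fin m)) (τ : Perm (Fin m)) (a : Fin m) :
    pairingFactor f (π * hyperoctahedral s τ) a =
      (if τ a ∈ s then -1 else 1 : ℤ) • pairingFactor f π (τ a) := by
  rw [pairingFactor, pairingFactor, Perm.mul_apply, Perm.mul_apply, hyperoctahedral_pos0,
    hyperoctahedral_pos1]
  split_ifs
  · rw [Xt_swap, ι, ι, map_neg, neg_one_smul]
  · rw [one_smul]

lemma pairingTerm_mul_hyperoctahedral {f : Fin (2 * m) → Fin N} (hf : Injective f)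
    (π : Perm (Fin (2 * m))) (s : Finset (Fin m)) (τ : Perm (Fin m)) :
    pairingTerm f (π * hyperoctahedral s τ) = pairingTerm f π := by
  have hprod : pairingProd f (π * hyperoctahedral s τ) = (-1) ^ s.card • pairingProd f π := by
    let x : Fin m → U N := fun b => (if b ∈ s then -1 else 1 : ℤ) • pairingFactor f π b
    have hcomm : ∀ i j, Commute (x i) (x j) := fun i j =>
      ((pairingFactor_commute hf π i j).smul_left _).smul_right _
    rw [pairingProd, funext (pairingFactor_mul_hyperoctahedral f π s τ)]
    change (List.ofFn (x ∘ τ)).prod = _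
    rw [prod_ofFn_comp_perm x τ hcomm, prod_ofFn_zsmul, Fintype.prod_ite_mem, Finset.prod_const,
      pairingProd]
  rw [pairingTerm, pairingTerm, hprod, map_mul, sign_hyperoctahedral, smul_smul, Units.val_mul,
    Units.val_pow_eq_pow_val, Units.val_neg, Units.val_one, mul_assoc, ← mul_pow, neg_one_mul,
    neg_neg, one_pow, mul_one]

def pairMin (f : Fin (2 * m) → Fin N) (π : Perm (Fin (2 * m))) (a : Fin m) : Fin N :=
  min (f (π (pos0 a))) (f (π (pos1 a)))

def invertedPairs (f : Fin (2 * m) → Fin N) (π : Perm (Fin (2 * m))) : Finset (Fin m) :=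
  Finset.univ.filter fun a => f (π (pos1 a)) < f (π (pos0 a))

section

variable {f : Fin (2 * m) → Fin N}

lemma pairMin_injective (hf : Injective f) (π : Perm (Fin (2 * m))) :
    Injective (pairMin f π) := by
  intro a b h
  have hval : ∀ x y, f (π x) = f (π y) → x = y := fun x y hxy => π.injective (hf hxy)
  rcases min_choice (f (π (pos0 a))) (f (π (pos1 a))) with ha | ha <;>
    rcases min_choice (f (π (pos0 b))) (f (π (pos1 b))) with hb | hb <;>
    rw [pairMin, pairMin, ha, hb] at h
  · exact pos0_injective (hval _ _ h)
  · exact absurd (hval _ _ h) (pos0_ne_pos1 a b)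
  · exact absurd (hval _ _ h).symm (pos0_ne_pos1 b a)
  · exact pos1_injective (hval _ _ h)

lemma pplus_iff (hf : Injective f) (π : Perm (Fin (2 * m))) :
    Pplus f π ↔ invertedPairs f π = ∅ ∧ StrictMono (pairMin f π) := by
  have hlt : (∀ a, f (π (pos0 a)) < f (π (pos1 a))) ↔ invertedPairs f π = ∅ := by
    simp only [invertedPairs, Finset.filter_eq_empty_iff, Finset.mem_univ, true_implies, not_lt]
    exact forall_congr' fun a => (hf.ne (π.injective.ne (pos0_ne_pos1 a a))).le_iff_lt.symm
  have hmin : (∀ a, f (π (pos0 a)) < f (π (pos1 a))) → pairMin f π = fun a => f (π (pos0 a)) :=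
    fun h => funext fun a => min_eq_left (h a).le
  constructor
  · rintro ⟨hmono, hpair⟩
    exact ⟨hlt.mp hpair, hmin hpair ▸ hmono⟩
  · rintro ⟨hinv, hmono⟩
    exact ⟨hmin (hlt.mpr hinv) ▸ hmono, hlt.mpr hinv⟩

lemma pairMin_mul_hyperoctahedral (π : Perm (Fin (2 * m))) (s : Finset (Fin m))
    (τ : Perm (Fin m)) : pairMin f (π * hyperoctahedral s τ) = pairMin f π ∘ τ := by
  ext1 a
  rw [comp_apply, pairMin, pairMin, Perm.mul_apply, Perm.mul_apply, hyperoctahedral_pos0,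
    hyperoctahedral_pos1]
  split_ifs
  · exact min_comm _ _
  · rfl

lemma mem_invertedPairs_mul_hyperoctahedral (hf : Injective f) (π : Perm (Fin (2 * m)))
    (s : Finset (Fin m)) (τ : Perm (Fin m)) (a : Fin m) :
    a ∈ invertedPairs f (π * hyperoctahedral s τ) ↔ (τ a ∈ invertedPairs f π ↔ τ a ∉ s) := by
  simp only [invertedPairs, Finset.mem_filter, Finset.mem_univ, true_and, Perm.mul_apply,
    hyperoctahedral_pos0, hyperoctahedral_pos1]
  by_cases h : τ a ∈ s
  · simp only [h, if_true, not_true_eq_false, iff_false, not_lt]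
    exact (hf.ne (π.injective.ne (pos0_ne_pos1 (τ a) (τ a)))).le_iff_lt.symm
  · simp only [h, if_false, not_false_eq_true, iff_true]

lemma invertedPairs_mul_inv_hyperoctahedral (hf : Injective f) {π₀ : Perm (Fin (2 * m))}
    (h₀ : Pplus f π₀) (s : Finset (Fin m)) (τ : Perm (Fin m)) :
    invertedPairs f (π₀ * (hyperoctahedral s τ)⁻¹) = s := by
  have hinv := ((pplus_iff hf π₀).mp h₀).1
  ext b
  have hb := mem_invertedPairs_mul_hyperoctahedral hf (π₀ * (hyperoctahedral s τ)⁻¹) s τ (τ.symm b)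
  rw [inv_mul_cancel_right, hinv, apply_symm_apply] at hb
  simp only [Finset.notMem_empty, false_iff] at hb
  tauto

lemma sort_pairMin_mul_inv_hyperoctahedral (hf : Injective f) {π₀ : Perm (Fin (2 * m))}
    (h₀ : Pplus f π₀) (s : Finset (Fin m)) (τ : Perm (Fin m)) :
    Tuple.sort (pairMin f (π₀ * (hyperoctahedral s τ)⁻¹)) = τ := by
  have hmono : pairMin f (π₀ * (hyperoctahedral s τ)⁻¹) ∘ τ = pairMin f π₀ := by
    rw [← pairMin_mul_hyperoctahedral, inv_mul_cancel_right]
  refine (Tuple.eq_sort_iff.mpr ⟨?_, fun i j hij heq => ?_⟩).symm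
  · exact hmono ▸ ((pplus_iff hf π₀).mp h₀).2.monotone
  · exact absurd (τ.injective (pairMin_injective hf _ heq)) hij.ne

lemma pplus_mul_hyperoctahedral_sort (hf : Injective f) (π : Perm (Fin (2 * m))) :
    Pplus f (π * hyperoctahedral (invertedPairs f π) (Tuple.sort (pairMin f π))) := by
  refine (pplus_iff hf _).mpr ⟨Finset.eq_empty_of_forall_notMem fun a ha => ?_, ?_⟩
  · rw [mem_invertedPairs_mul_hyperoctahedral hf] at ha
    tauto
  · rw [pairMin_mul_hyperoctahedral]
    exact (Tuple.monotone_sort _).strictMono_of_injective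
      ((pairMin_injective hf π).comp (Tuple.sort _).injective)

def pplusHyperoctahedralEquiv (hf : Injective f) :
    {π // Pplus f π} × (Finset (Fin m) × Perm (Fin m)) ≃ Perm (Fin (2 * m)) where
  toFun x := x.1.1 * (hyperoctahedral x.2.1 x.2.2)⁻¹
  invFun π := (⟨_, pplus_mul_hyperoctahedral_sort hf π⟩, invertedPairs f π,
    Tuple.sort (pairMin f π))
  left_inv := by
    rintro ⟨⟨π₀, h₀⟩, s, τ⟩
    simp only [invertedPairs_mul_inv_hyperoctahedral hf h₀,
      sort_pairMin_mul_inv_hyperoctahedral hf h₀, inv_mul_cancel_right]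
  right_inv π := mul_inv_cancel_right _ _

lemma pfaffianSum_eq_card_smul_Wt (S : Finset (Fin N)) (h : S.card = 2 * m) :
    pfaffianSum (S.orderEmbOfFin h) =
      Fintype.card (Finset (Fin m) × Perm (Fin m)) • Wt N m S := by
  rw [Wt_eq_sum_pairingTerm S h]
  set g : Fin (2 * m) → Fin N := ⇑(S.orderEmbOfFin h)
  have hg : Injective g := (S.orderEmbOfFin h).injective
  have hterm : ∀ π₀ s τ, pairingTerm g (π₀ * (hyperoctahedral s τ)⁻¹) = pairingTerm g π₀ :=
    fun π₀ s τ => by rw [← pairingTerm_mul_hyperoctahedral hg _ s τ, inv_mul_cancel_right]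
  rw [pfaffianSum, ← (pplusHyperoctahedralEquiv hg).sum_comp, Fintype.sum_prod_type,
    Finset.sum_subtype (Finset.univ.filter _) (p := Pplus g) fun π => by simp, Finset.smul_sum]
  refine Finset.sum_congr rfl fun π₀ _ => ?_
  simp only [pplusHyperoctahedralEquiv, Equiv.coe_fn_mk, hterm, Finset.sum_const,
    Finset.card_univ]

end

end SOC

open SOC in
theorem pfaffian_commute_generator_mixed_general
    (N p : ℕ)
    (I : Finset (Fin N)) (hI : I.card = 2*(p+1)) (s t : Fin N)
    (hs : s ∈ I) (ht : t ∉ I)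
    (hJ : (insert t (I.erase s)).card = 2*(p+1))
    (q r : Fin (2*(p+1)))
    (hq : I.orderEmbOfFin hI q = s)
    (hr : (insert t (I.erase s)).orderEmbOfFin hJ r = t) :
    Wt N (p+1) I * ι (Xt s t) =
      ι (Xt s t) * Wt N (p+1) I -
        ((-1 : ℤ)^((q : ℕ) + (r : ℕ))) • Wt N (p+1) (insert t (I.erase s)) := by
  have hcomm := pfaffianSum_mul_sub_mul_pfaffianSum (t := t) (I.orderEmbOfFin hI).injective
    (fun x hx => ht (hx ▸ I.orderEmbOfFin_mem hI x)) q
  have hreindex : pfaffianSum (Function.update (I.orderEmbOfFin hI) q t) =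
      ((-1 : ℤ) ^ ((q : ℕ) + r)) • pfaffianSum ((insert t (I.erase s)).orderEmbOfFin hJ) := by
    rw [Finset.update_orderEmbOfFin_eq_comp (n := 2 * p + 1) hI hs ht hJ hq hr,
      pfaffianSum_comp_perm, Fin.sign_cycleRange_symm_mul_cycleRange]
  rw [hq, hreindex, pfaffianSum_eq_card_smul_Wt, pfaffianSum_eq_card_smul_Wt, smul_mul_assoc,
    mul_smul_comm, ← smul_sub, smul_comm, ← smul_neg, ← Nat.cast_smul_eq_nsmul ℂ,
    ← Nat.cast_smul_eq_nsmul ℂ] at hcomm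
  rw [sub_eq_add_neg, ← sub_eq_iff_eq_add',
    smul_right_injective (U N) (Nat.cast_ne_zero.mpr Fintype.card_ne_zero) hcomm]

open SOC in
/-- Commutation of Pfaffian-type elements with generators, mixed case (Lemma 2-3(2)). -/
theorem pfaffian_commute_generator_mixed
    (N p : ℕ) (hN : 3 ≤ N) (hpN : 2*p + 2 ≤ N)
    (I : Finset (Fin N)) (hI : I.card = 2*(p+1)) (s t : Fin N) (hst : s ≠ t)
    (hs : s ∈ I) (ht : t ∉ I)
    (hJ : (insert t (I.erase s)).card = 2*(p+1))
    (q r : Fin (2*(p+1)))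
    (hq : I.orderEmbOfFin hI q = s)
    (hr : (insert t (I.erase s)).orderEmbOfFin hJ r = t) :
    Wt N (p+1) I * ι (Xt s t) =
      ι (Xt s t) * Wt N (p+1) I -
        ((-1 : ℤ)^((q : ℕ) + (r : ℕ))) • Wt N (p+1) (insert t (I.erase s)) :=
  pfaffian_commute_generator_mixed_general N p I hI s t hs ht hJ q r hq hr
end
end

section
/- Harish-Chandra reduction of the Casimir-type element (Proposition 2-11(1)): Let N ≥ 3 and set W̃₁ := Σ_{1 ≤ i < j ≤ N} ι(X̃_{ij})² ∈ U(𝔰𝔬(N,ℂ)). Then W̃₁ + Σ_{1 ≤ l ≤ ⌊N/2⌋} (√−1·ι(X̃_{l,N+1−l}))·(√−1·ι(X̃_{l,N+1−l}) − (N−2l)) ∈ ñ(0)·U. -/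
open scoped Classical Matrix

set_option maxHeartbeats 1000000
set_option synthInstance.maxHeartbeats 400000

attribute [local instance 100] LieRing.ofAssociativeRing

noncomputable section

/-!
Pair the roots of 𝔰𝔬(N) around the antidiagonal: for `q < l < rev q` the generator
`Ñ = X̃_{l,rev q} + √−1 X̃_{q,l}` of `ñ(0)` satisfies
`X̃_{q,l}² + X̃_{l,rev q}² = Ñ (X̃_{l,rev q} − √−1 X̃_{q,l}) + √−1 X̃_{q,rev q}`,
the last term coming from the bracket `[X̃_{q,l}, X̃_{l,rev q}] = −X̃_{q,rev q}`.
Every pair `i < j` with `j ≠ rev i` occurs in exactly one such couple, and each `q < N/2`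
occurs as the first index of `N − 2 − 2q` of them; the resulting multiple of
`√−1 X̃_{q,rev q}` together with the Cartan squares `X̃_{q,rev q}²` is exactly what the
correction term `H_q (H_q − (N − 2q − 2))`, `H_q = √−1 X̃_{q,rev q}`, cancels.
-/

open Finset

namespace SOC

section Pairs

variable {N : ℕ} {M : Type*} [AddCommMonoid M]

/-- The index set of the generators `Ntl q l` of `ñ(0)`. -/
def innerPairs (N : ℕ) : Finset (Fin N × Fin N) :=
  univ.filter fun p => p.1 < p.2 ∧ p.2 < p.1.rev

theorem mem_innerPairs {p : Fin N × Fin N} : p ∈ innerPairs N ↔ p.1 < p.2 ∧ p.2 < p.1.rev := by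
  simp [innerPairs]

/-- The pairs `i < j` with `rev i < j` are matched with `innerPairs` by `(i, j) ↦ (rev j, i)`. -/
theorem sum_lt_pairs_eq (f : Fin N → Fin N → M) :
    ∑ p ∈ univ.filter (fun p : Fin N × Fin N => p.1 < p.2), f p.1 p.2 =
      ∑ p ∈ innerPairs N, (f p.1 p.2 + f p.2 p.1.rev) +
        ∑ l ∈ univ.filter (fun l : Fin N => (l : ℕ) < N / 2), f l l.rev := by
  have above : ∑ p ∈ univ.filter (fun p : Fin N × Fin N => p.1 < p.2 ∧ p.1.rev < p.2),
      f p.1 p.2 = ∑ p ∈ innerPairs N, f p.2 p.1.rev := by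
    refine sum_nbij' (fun p => (p.2.rev, p.1)) (fun p => (p.2, p.1.rev)) ?_ ?_ ?_ ?_ ?_
    all_goals
      simp only [mem_filter, mem_innerPairs, mem_univ, true_and, Prod.forall, Fin.lt_def,
        Fin.val_rev, Fin.rev_rev, implies_true]
    all_goals intro i j; have := i.isLt; have := j.isLt; omega
  have on : ∑ p ∈ univ.filter (fun p : Fin N × Fin N => p.1 < p.2 ∧ p.2 = p.1.rev),
      f p.1 p.2 = ∑ l ∈ univ.filter (fun l : Fin N => (l : ℕ) < N / 2), f l l.rev := by
    refine sum_nbij' Prod.fst (fun l => (l, l.rev)) ?_ ?_ ?_ ?_ ?_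
    all_goals
      simp only [mem_filter, mem_univ, true_and, and_true, Prod.forall, Fin.lt_def,
        Prod.mk.injEq, Fin.val_rev, implies_true]
    · rintro i j ⟨hij, rfl⟩
      simp only [Fin.val_rev] at hij
      omega
    · omega
    · rintro i j ⟨-, rfl⟩; rfl
    · rintro i j ⟨-, rfl⟩; rfl
  rw [sum_add_distrib, ← above, ← on, innerPairs]
  simp only [sum_filter, ← sum_add_distrib]
  refine sum_congr rfl fun p _ => ?_
  rcases lt_trichotomy p.2 p.1.rev with h | h | h
  · simp [h, h.ne, h.not_gt]
  · simp [h]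
  · simp [h, h.ne', h.not_gt]

theorem sum_innerPairs_fst (g : Fin N → M) :
    ∑ p ∈ innerPairs N, g p.1 =
      ∑ q ∈ univ.filter (fun q : Fin N => (q : ℕ) < N / 2), (N - 2 - 2 * q) • g q := by
  rw [sum_finset_product (innerPairs N) _ fun q => Ioo q q.rev]
  · refine sum_congr rfl fun q _ => ?_
    simp only [sum_const, Fin.card_Ioo, Fin.val_rev]
    congr 1
    omega
  · rintro ⟨q, l⟩
    simp only [mem_innerPairs, mem_filter, mem_univ, true_and, mem_Ioo, Fin.lt_def, Fin.val_rev]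
    omega

end Pairs

theorem I_smul_mul_I_smul_sub_smul_one {A : Type*} [Ring A] [Algebra ℂ A] (a : A) (c : ℂ) :
    (Complex.I • a) * (Complex.I • a - c • 1) = -(a ^ 2 + c • Complex.I • a) := by
  simp only [mul_sub, smul_mul_smul_comm, Complex.I_mul_I, mul_one, sq]
  module

section Algebra

variable {N : ℕ}

theorem Xt_lie_Xt {i j k : Fin N} (hij : i ≠ j) (hjk : j ≠ k) (hik : i ≠ k) :
    ⁅Xt i j, Xt j k⁆ = -Xt i k := by
  apply Subtype.ext
  change (Matrix.single j i 1 - Matrix.single i j 1) * (Matrix.single k j 1 - Matrix.single j k 1) -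
      (Matrix.single k j 1 - Matrix.single j k 1) * (Matrix.single j i 1 - Matrix.single i j 1) =
    -(Matrix.single k i 1 - Matrix.single i k 1)
  simp only [sub_mul, mul_sub, Matrix.single_mul_single_same, Matrix.single_mul_single_of_ne,
    ne_eq, hij, hjk, hik, hij.symm, hjk.symm, hik.symm, not_false_eq_true, mul_one]
  abel

theorem ι_lie (x y : so N) : ι ⁅x, y⁆ = ι x * ι y - ι y * ι x := by
  simp only [ι, LieHom.map_lie, Ring.lie_def]

theorem ι_Ntl (q l : Fin N) : ι (Ntl q l) = ι (Xt l q.rev) + Complex.I • ι (Xt q l) := by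
  simp only [ι, Ntl, map_add, map_smul]

theorem sq_add_sq_eq_ι_Ntl_mul {q l : Fin N} (h1 : q < l) (h2 : l < q.rev) :
    ι (Xt q l) ^ 2 + ι (Xt l q.rev) ^ 2 =
      ι (Ntl q l) * (ι (Xt l q.rev) - Complex.I • ι (Xt q l)) + Complex.I • ι (Xt q q.rev) := by
  have hcomm : ι (Xt q l) * ι (Xt l q.rev) = ι (Xt l q.rev) * ι (Xt q l) - ι (Xt q q.rev) := by
    have hlie := ι_lie (Xt q l) (Xt l q.rev)
    have hneg : ι (-Xt q q.rev) = -ι (Xt q q.rev) := map_neg _ _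
    rw [Xt_lie_Xt h1.ne h2.ne (h1.trans h2).ne, hneg] at hlie
    rw [sub_eq_add_neg, hlie]
    abel
  rw [ι_Ntl, add_mul, mul_sub, mul_sub, smul_mul_assoc, mul_smul_comm, smul_mul_assoc,
    mul_smul_comm, hcomm, smul_smul, Complex.I_mul_I, sq, sq]
  module

theorem ι_Ntl_mul_mem_nUs {q l : Fin N} (h1 : q < l) (h2 : l < q.rev) (u : U N) :
    ι (Ntl q l) * u ∈ nUs N (N / 2) := by
  refine Submodule.subset_span ⟨q, ?_, Ntl q l, Submodule.subset_span ⟨l, h1, h2, rfl⟩, u, rfl⟩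
  rw [Fin.lt_def] at h1 h2
  rw [Fin.val_rev] at h2
  omega

end Algebra

theorem casimir_eq_sum_innerPairs (N : ℕ) :
    (∑ ij ∈ univ.filter (fun ij : Fin N × Fin N => ij.1 < ij.2), (ι (Xt ij.1 ij.2))^2) +
      ∑ l ∈ univ.filter (fun l : Fin N => (l : ℕ) < N/2),
        (Complex.I • ι (Xt l l.rev)) *
          (Complex.I • ι (Xt l l.rev) - ((N : ℂ) - 2*((l : ℕ)+1)) • 1) =
      ∑ p ∈ innerPairs N,
        ι (Ntl p.1 p.2) * (ι (Xt p.2 p.1.rev) - Complex.I • ι (Xt p.1 p.2)) := by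
  rw [sum_lt_pairs_eq (fun i j => ι (Xt i j) ^ 2),
    sum_congr rfl fun p hp => sq_add_sq_eq_ι_Ntl_mul (mem_innerPairs.1 hp).1 (mem_innerPairs.1 hp).2,
    sum_add_distrib, sum_innerPairs_fst (fun q => Complex.I • ι (Xt q q.rev)), add_assoc, add_assoc,
    ← sum_add_distrib, ← sum_add_distrib, add_eq_left]
  refine sum_eq_zero fun l hl => ?_
  have hcount : ((N - 2 - 2 * l : ℕ) : ℂ) = N - 2 * ((l : ℕ) + 1) := by
    rw [mem_filter] at hl
    rw [Nat.cast_sub (by omega), Nat.cast_sub (by omega)]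
    push_cast
    ring
  rw [← Nat.cast_smul_eq_nsmul ℂ, hcount, I_smul_mul_I_smul_sub_smul_one]
  abel

end SOC

open SOC in
theorem casimir_mod_n0_general
    (N : ℕ) :
    (∑ ij ∈ Finset.univ.filter (fun ij : Fin N × Fin N => ij.1 < ij.2),
        (ι (Xt ij.1 ij.2))^2) +
      ∑ l ∈ Finset.univ.filter (fun l : Fin N => (l : ℕ) < N/2),
        (Complex.I • ι (Xt l l.rev)) *
          (Complex.I • ι (Xt l l.rev) - ((N : ℂ) - 2*((l : ℕ)+1)) • 1)
      ∈ nUs N (N/2) := by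
  rw [casimir_eq_sum_innerPairs]
  exact Submodule.sum_mem _ fun p hp =>
    ι_Ntl_mul_mem_nUs (mem_innerPairs.1 hp).1 (mem_innerPairs.1 hp).2 _

open SOC in
/-- Harish-Chandra reduction of the Casimir-type element (Proposition 2-11(1)). -/
theorem casimir_mod_n0
    (N : ℕ) (hN : 3 ≤ N) :
    (∑ ij ∈ Finset.univ.filter (fun ij : Fin N × Fin N => ij.1 < ij.2),
        (ι (Xt ij.1 ij.2))^2) +
      ∑ l ∈ Finset.univ.filter (fun l : Fin N => (l : ℕ) < N/2),
        (Complex.I • ι (Xt l l.rev)) *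
          (Complex.I • ι (Xt l l.rev) - ((N : ℂ) - 2*((l : ℕ)+1)) • 1)
      ∈ nUs N (N/2) :=
  casimir_mod_n0_general N
end
end
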